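/- Let t be a finite rooted ordered tree with k ≥ 1 distinguished leaves (parameters) in which (i) every node of t has at most r children, (ii) the child of a node of arity 1 is always a node of arity at least 2, and (iii) every node of arity at least 2 has at least two children whose subtrees contain distinguished leaves. Then t has at most 2r(k−1) + 2 nodes. -/

import Mathlib

/-- A finite rooted ordered tree; a node marked `true` with no children is a distinguished
leaf (a parameter). -/
inductive BTree : Type where
  | node : Bool → List BTree → BTree

/-- Does the tree contain a distinguished (marked) leaf? -/
def BTree.hasML : BTree → Bool
  | .node m cs => (m && cs.isEmpty) || cs.attach.any (fun c => BTree.hasML c.1)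
decreasing_by
  have h1 := List.sizeOf_lt_of_mem c.2
  simp only [BTree.node.sizeOf_spec] at *
  omega

/-- The number of distinguished (marked) leaves. -/
def BTree.countML : BTree → ℕ
  | .node m cs =>
      (if m && cs.isEmpty then 1 else 0) + (cs.attach.map (fun c => BTree.countML c.1)).sum
decreasing_by
  have h1 := List.sizeOf_lt_of_mem c.2
  simp only [BTree.node.sizeOf_spec] at *
  omega

/-- The total number of nodes. -/
def BTree.countNodes : BTree → ℕ
  | .node _ cs => 1 + (cs.attach.map (fun c => BTree.countNodes c.1)).sum
decreasing_by
  have h1 := List.sizeOf_lt_of_mem c.2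
  simp only [BTree.node.sizeOf_spec] at *
  omega

/-- The arity of the root node: its number of children. -/
def BTree.arity : BTree → ℕ
  | .node _ cs => cs.length

/-- The property `p` (of the mark and the children list) holds at every node of the tree. -/
def BTree.AllNodes (p : Bool → List BTree → Prop) : BTree → Prop
  | .node m cs => p m cs ∧ ∀ c ∈ cs.attach, BTree.AllNodes p c.1
decreasing_by
  have h1 := List.sizeOf_lt_of_mem c.2
  simp only [BTree.node.sizeOf_spec] at *
  omega


section Aux

lemma BTree.hasML_node (m : Bool) (cs : List BTree) :
    (BTree.node m cs).hasML = ((m && cs.isEmpty) || cs.any BTree.hasML) := by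
  rw [BTree.hasML, Bool.eq_iff_iff]
  simp [List.any_eq_true]

lemma BTree.countML_node (m : Bool) (cs : List BTree) :
    (BTree.node m cs).countML
      = (if m && cs.isEmpty then 1 else 0) + (cs.map BTree.countML).sum := by
  rw [BTree.countML]; congr 2; rw [List.attach_map_val]

lemma BTree.countNodes_node (m : Bool) (cs : List BTree) :
    (BTree.node m cs).countNodes = 1 + (cs.map BTree.countNodes).sum := by
  rw [BTree.countNodes]; congr 2; rw [List.attach_map_val]

lemma BTree.allNodes_node (p : Bool → List BTree → Prop) (m : Bool) (cs : List BTree) :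
    (BTree.node m cs).AllNodes p ↔ (p m cs ∧ ∀ c ∈ cs, BTree.AllNodes p c) := by
  rw [BTree.AllNodes]
  constructor
  · rintro ⟨h1, h2⟩; exact ⟨h1, fun c hc => h2 ⟨c, hc⟩ (List.mem_attach _ _)⟩
  · rintro ⟨h1, h2⟩; exact ⟨h1, fun c _ => h2 c.1 c.2⟩

lemma BTree.hasML_iff : ∀ t : BTree, t.hasML = true ↔ 1 ≤ t.countML
  | .node m cs => by
    rw [BTree.hasML_node, BTree.countML_node, Bool.or_eq_true, List.any_eq_true]
    constructor
    · rintro (h | ⟨c, hc, hcml⟩)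
      · simp [h]
      · have h1 := (BTree.hasML_iff c).1 hcml
        have h2 : BTree.countML c ≤ (cs.map BTree.countML).sum :=
          List.le_sum_of_mem (List.mem_map_of_mem hc)
        omega
    · intro h
      by_cases hm : (m && cs.isEmpty) = true
      · exact Or.inl hm
      · right
        rw [Bool.not_eq_true] at hm
        rw [hm] at h
        simp only [Bool.false_eq_true, if_false, Nat.zero_add] at h
        have : ∃ x ∈ cs.map BTree.countML, x ≠ 0 := by
          by_contra hcon
          push_neg at hcon
          have : (cs.map BTree.countML).sum = 0 :=
            List.sum_eq_zero fun x hx => hcon x hx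
          omega
        obtain ⟨x, hx, hx0⟩ := this
        obtain ⟨c, hc, rfl⟩ := List.mem_map.1 hx
        exact ⟨c, hc, (BTree.hasML_iff c).2 (by omega)⟩
decreasing_by
  all_goals
    have h1 := List.sizeOf_lt_of_mem hc
    simp only [BTree.node.sizeOf_spec] at *
    omega

/-- The skeleton predicate. -/
def skelP (r : ℕ) : Bool → List BTree → Prop := fun m cs =>
  (m = true → cs = []) ∧
  cs.length ≤ r ∧
  (cs.length = 1 → ∀ c ∈ cs, 2 ≤ c.arity) ∧
  (2 ≤ cs.length → 2 ≤ (cs.filter BTree.hasML).length)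

/-- A skeleton tree with no marked leaf is a single node. -/
lemma BTree.noML_single (r : ℕ) (m : Bool) (cs : List BTree)
    (hall : (BTree.node m cs).AllNodes (skelP r))
    (hml : (BTree.node m cs).hasML = false) : cs = [] := by
  rw [BTree.allNodes_node] at hall
  obtain ⟨⟨hm, hr, h1, h2⟩, hch⟩ := hall
  rw [BTree.hasML_node] at hml
  simp only [Bool.or_eq_false_iff, List.any_eq_false] at hml
  obtain ⟨-, hchml⟩ := hml
  have hfilt : cs.filter BTree.hasML = [] := by
    rw [List.filter_eq_nil_iff]
    intro c hc
    simp [hchml c hc]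
  match hcs : cs with
  | [] => rfl
  | [c] =>
    exfalso
    have harity := h1 (by simp [hcs]) c (by simp)
    obtain ⟨mc, csc⟩ := c
    rw [BTree.arity] at harity
    have hcall := hch (.node mc csc) (by simp [hcs])
    rw [BTree.allNodes_node] at hcall
    obtain ⟨⟨-, -, -, hc2⟩, -⟩ := hcall
    have hcml := hchml (.node mc csc) (by simp [hcs])
    rw [BTree.hasML_node] at hcml
    rw [Bool.not_eq_true, Bool.or_eq_false_iff] at hcml
    simp only [List.any_eq_false] at hcml
    have hfc : csc.filter BTree.hasML = [] := by
      rw [List.filter_eq_nil_iff]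
      intro c hc
      simp [hcml.2 c hc]
    have := hc2 harity
    rw [hfc] at this
    simp at this
  | c1 :: c2 :: rest =>
    exfalso
    have := h2 (by simp [hcs])
    rw [hfilt] at this
    simp at this

lemma sum_ite_filter (p : BTree → Bool) (cs : List BTree) :
    (cs.map (fun c => if p c then (1:ℕ) else 0)).sum = (cs.filter p).length := by
  induction cs with
  | nil => simp
  | cons c cs ih =>
    by_cases h : p c <;> simp [h, ih, List.filter_cons] <;> omega

lemma sum_ite_two_one (p : BTree → Bool) (cs : List BTree) :
    (cs.map (fun c => if p c then (2:ℕ) else 1)).sum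
      = cs.length + (cs.filter p).length := by
  induction cs with
  | nil => simp
  | cons c cs ih =>
    by_cases h : p c <;> simp [h, ih, List.filter_cons] <;> omega

/-- Main strengthened bound. -/
lemma BTree.main (r : ℕ) : ∀ t : BTree, t.AllNodes (skelP r) → 1 ≤ t.countML →
    t.countNodes ≤ 2 * r * (t.countML - 1) + 2 ∧
      (t.arity ≠ 1 → t.countNodes ≤ 2 * r * (t.countML - 1) + 1)
  | .node m cs => fun hall hk => by
    have hall' := hall
    rw [BTree.allNodes_node] at hall'
    obtain ⟨⟨hm, hr, h1, h2⟩, hch⟩ := hall'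
    rw [BTree.countNodes_node, BTree.countML_node] at *
    rw [BTree.arity]
    match hcs : cs with
    | [] =>
      subst hcs
      cases m with
      | false => simp at hk
      | true => refine ⟨by simp, fun _ => by simp⟩
    | [c] =>
      have hm0 : m = false := by
        cases m
        · rfl
        · exact absurd (hm rfl) (by simp [hcs])
      subst hcs
      subst hm0
      simp only [Bool.false_and, if_false, List.map_cons, List.map_nil,
        List.sum_cons, List.sum_nil, Nat.zero_add, Nat.add_zero,
        Bool.false_eq_true] at hk ⊢
      have harity := h1 rfl c (by simp)
      have hcall := hch c (by simp)
      have hIH := BTree.main r c hcall hk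
      have hc1 : c.arity ≠ 1 := by omega
      have h2' := hIH.2 hc1
      refine ⟨by linarith, fun h => by simp at h⟩
    | c1 :: c2 :: rest =>
      subst hcs
      have hm0 : m = false := by
        cases m
        · rfl
        · exact absurd (hm rfl) (by simp)
      subst hm0
      simp only [Bool.false_and, Bool.false_eq_true, if_false, Nat.zero_add] at hk ⊢
      -- per-child bound
      have hkey : ∀ c ∈ (c1 :: c2 :: rest), BTree.countNodes c + 2 * r * (if BTree.hasML c then 1 else 0)
          ≤ 2 * r * BTree.countML c + (if BTree.hasML c then 2 else 1) := by
        intro c hc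
        by_cases hml : BTree.hasML c
        · have hkc : 1 ≤ c.countML := (BTree.hasML_iff c).1 hml
          have hIH := (BTree.main r c (hch c hc) hkc).1
          have hmul : 2 * r * c.countML = 2 * r * (c.countML - 1) + 2 * r := by
            obtain ⟨y, hy⟩ := Nat.exists_eq_add_of_le hkc
            rw [hy]
            have hyy : 1 + y - 1 = y := by omega
            rw [hyy]; ring
          simp only [hml, if_true]
          linarith
        · have hml' : c.hasML = false := by simpa using hml
          have hk0 : c.countML = 0 := by
            by_contra hcon
            rw [(BTree.hasML_iff c).2 (by omega)] at hml'
            exact absurd hml' (by simp)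
          obtain ⟨mc, csc⟩ := c
          have hempty := BTree.noML_single r mc csc (hch _ hc) hml'
          subst hempty
          rw [BTree.countNodes_node]
          simp [hml, hk0]
      have hsum : ((c1 :: c2 :: rest).map (fun c =>
            BTree.countNodes c + 2 * r * (if BTree.hasML c then 1 else 0))).sum
          ≤ ((c1 :: c2 :: rest).map (fun c =>
            2 * r * BTree.countML c + (if BTree.hasML c then 2 else 1))).sum :=
        List.sum_le_sum hkey
      rw [List.sum_map_add, List.sum_map_add, List.sum_map_mul_left,
        List.sum_map_mul_left, sum_ite_filter, sum_ite_two_one] at hsum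
      have hs2 : 2 ≤ ((c1 :: c2 :: rest).filter BTree.hasML).length := h2 (by simp)
      have hsd : ((c1 :: c2 :: rest).filter BTree.hasML).length ≤ (c1 :: c2 :: rest).length :=
        List.length_filter_le _ _
      have hdr : (c1 :: c2 :: rest).length ≤ r := hr
      have hkgoal : 2 * r * ((c1 :: c2 :: rest).map BTree.countML).sum
          = 2 * r * (((c1 :: c2 :: rest).map BTree.countML).sum - 1) + 2 * r := by
        obtain ⟨y, hy⟩ := Nat.exists_eq_add_of_le hk
        rw [hy]
        have hyy : 1 + y - 1 = y := by omega
        rw [hyy]; ring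
      have hnl : ((c1 :: c2 :: rest).filter BTree.hasML).length + (c1 :: c2 :: rest).length + 2 * r
          ≤ 2 * r * ((c1 :: c2 :: rest).filter BTree.hasML).length := by
        have h4 : 2 * r * 2 ≤ 2 * r * ((c1 :: c2 :: rest).filter BTree.hasML).length :=
          Nat.mul_le_mul_left _ hs2
        have h5 : ((c1 :: c2 :: rest).filter BTree.hasML).length ≤ r := le_trans hsd hdr
        linarith
      have hmain : 1 + ((c1 :: c2 :: rest).map BTree.countNodes).sum
          ≤ 2 * r * (((c1 :: c2 :: rest).map BTree.countML).sum - 1) + 1 := by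
        linarith [hsum, hkgoal, hnl]
      exact ⟨by linarith, fun _ => hmain⟩
decreasing_by
  all_goals
    first
    | (have hsz := List.sizeOf_lt_of_mem hc
       simp only [BTree.node.sizeOf_spec] at *
       omega)
    | (simp only [BTree.node.sizeOf_spec, List.cons.sizeOf_spec] at *
       omega)

end Aux

/-- A skeleton tree with `k ≥ 1` distinguished leaves in which (marked nodes are leaves,)
(i) every node has at most `r` children, (ii) the child of an arity-1 node is a node of
arity at least 2, and (iii) every node of arity ≥ 2 has at least two children whose subtrees
contain distinguished leaves, has at most `2·r·(k−1) + 2` nodes. -/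
theorem stmt17 (r : ℕ) (t : BTree)
    (hall : t.AllNodes (fun m cs =>
      (m = true → cs = []) ∧
      cs.length ≤ r ∧
      (cs.length = 1 → ∀ c ∈ cs, 2 ≤ c.arity) ∧
      (2 ≤ cs.length → 2 ≤ (cs.filter BTree.hasML).length)))
    (hk : 1 ≤ t.countML) :
    t.countNodes ≤ 2 * r * (t.countML - 1) + 2 := by
  exact (BTree.main r t hall hk).1
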